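/- If a topological group G has a G-base {U_α : α ∈ ℕ^ℕ} of neighborhoods of the identity satisfying condition (D), and G is a Baire space, then G is metrizable. -/

import Mathlib

open Filter Set Topology Pointwise Bornology

section Defs

variable {X : Type*} [TopologicalSpace X]

/-- `N` is a network at `x`: every neighborhood of `x` contains a member of `N` containing `x`. -/
def IsNetworkAt (N : Set (Set X)) (x : X) : Prop :=
  ∀ O ∈ nhds x, ∃ n ∈ N, x ∈ n ∧ n ⊆ O

/-- `N` is a `cn`-network at `x`. -/
def IsCnNetworkAt (N : Set (Set X)) (x : X) : Prop :=
  ∀ O ∈ nhds x, (⋃₀ {n | n ∈ N ∧ x ∈ n ∧ n ⊆ O}) ∈ nhds x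

/-- `N` is a `cp`-network (Pytkeev network with `x ∈ N`) at `x`. -/
def IsCpNetworkAt (N : Set (Set X)) (x : X) : Prop :=
  IsNetworkAt N x ∧
  ∀ A : Set X, x ∈ closure A \ A → ∀ O ∈ nhds x,
    ∃ n ∈ N, x ∈ n ∧ n ⊆ O ∧ (n ∩ A).Infinite

/-- `N` is a `ck`-network at `x`. -/
def IsCkNetworkAt (N : Set (Set X)) (x : X) : Prop :=
  ∀ O ∈ nhds x, ∃ U ∈ nhds x, ∀ K : Set X, K ⊆ U → IsCompact K →
    ∃ F : Finset (Set X), ↑F ⊆ N ∧ (∀ f ∈ F, x ∈ f) ∧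
      K ⊆ ⋃₀ ↑F ∧ ⋃₀ (↑F : Set (Set X)) ⊆ O

/-- `N` is a `cs*`-network at `x`. -/
def IsCsStarNetworkAt (N : Set (Set X)) (x : X) : Prop :=
  ∀ u : ℕ → X, Tendsto u atTop (nhds x) → ∀ O ∈ nhds x,
    ∃ n ∈ N, x ∈ n ∧ n ⊆ O ∧ {k | u k ∈ n}.Infinite

/-- `N` is a network for the topology of `X`. -/
def IsNetwork (N : Set (Set X)) : Prop :=
  ∀ O : Set X, IsOpen O → ∀ x ∈ O, ∃ n ∈ N, x ∈ n ∧ n ⊆ O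

/-- The set `D_k(α)`: the intersection of all `U β` over `β ∈ M` agreeing with `α`
on the first `k` coordinates. -/
def Dk (M : Set (ℕ → ℕ)) (U : (ℕ → ℕ) → Set X) (k : ℕ) (α : ℕ → ℕ) : Set X :=
  ⋂ β ∈ {β ∈ M | ∀ i < k, β i = α i}, U β

/-- `{U α : α ∈ M}` is an `M`-decreasing neighborhood base (small base) at `x`. -/
def IsSmallBaseAt (M : Set (ℕ → ℕ)) (U : (ℕ → ℕ) → Set X) (x : X) : Prop :=
  (∀ α ∈ M, ∀ β ∈ M, α ≤ β → U β ⊆ U α) ∧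
  (∀ α ∈ M, U α ∈ nhds x) ∧
  (∀ O ∈ nhds x, ∃ α ∈ M, U α ⊆ O)

/-- `{U α : α ∈ M}` is an `M`-decreasing base of the topology (small base of `X`). -/
def IsSmallBaseTop (M : Set (ℕ → ℕ)) (U : (ℕ → ℕ) → Set X) : Prop :=
  (∀ α ∈ M, ∀ β ∈ M, α ≤ β → U β ⊆ U α) ∧
  (∀ α ∈ M, IsOpen (U α)) ∧
  (∀ O : Set X, IsOpen O → ∀ x ∈ O, ∃ α ∈ M, x ∈ U α ∧ U α ⊆ O)

/-- Condition (D): `U α = ⋃ₖ D_k(α)` for every `α ∈ M`. -/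
def CondD (M : Set (ℕ → ℕ)) (U : (ℕ → ℕ) → Set X) : Prop :=
  ∀ α ∈ M, U α = ⋃ k : ℕ, Dk M U k α

end Defs

/-- The strong Pytkeev property of Tsaban and Zdomskyy. -/
def HasStrongPytkeev (X : Type*) [TopologicalSpace X] : Prop :=
  ∀ x : X, ∃ D : Set (Set X), D.Countable ∧
    ∀ U ∈ nhds x, ∀ A : Set X, x ∈ closure A \ A →
      ∃ d ∈ D, d ⊆ U ∧ (d ∩ A).Infinite

/-!
By condition (D) and the Baire property, every `U α` is a countable union of sets `D_k(α)`, one of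
which is non-meagre, and `D_k(α)` depends only on the first `k` coordinates of `α`; so countably
many sets `D` are enough to find a non-meagre one inside any neighborhood of the identity. By
Pettis' argument `closure (D * D⁻¹)` is then a neighborhood of the identity, so these closures form
a countable base at the identity, and a first-countable Hausdorff group is metrizable
(Birkhoff–Kakutani).
-/

lemma not_isMeagre_of_mem_nhds {X : Type*} [TopologicalSpace X] [BaireSpace X] {s : Set X} {x : X}
    (hs : s ∈ 𝓝 x) : ¬IsMeagre s := fun h =>
  not_isMeagre_of_isOpen isOpen_interior ⟨x, mem_interior_iff_mem_nhds.2 hs⟩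
    (h.mono interior_subset)

section Dk

variable {X : Type*} {M : Set (ℕ → ℕ)} {U : (ℕ → ℕ) → Set X}

lemma Dk_subset {α : ℕ → ℕ} (hα : α ∈ M) (k : ℕ) : Dk M U k α ⊆ U α :=
  biInter_subset_of_mem ⟨hα, fun _ _ => rfl⟩

lemma Dk_congr {k : ℕ} {α β : ℕ → ℕ} (h : ∀ i < k, α i = β i) : Dk M U k α = Dk M U k β := by
  have : {γ ∈ M | ∀ i < k, γ i = α i} = {γ ∈ M | ∀ i < k, γ i = β i} := by
    ext γ
    simp +contextual [h]
  simp only [Dk, this]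

lemma countable_range_Dk (M : Set (ℕ → ℕ)) (U : (ℕ → ℕ) → Set X) :
    (range fun p : ℕ × (ℕ → ℕ) => Dk M U p.1 p.2).Countable := by
  refine (countable_range fun l : List ℕ => Dk M U l.length (l.getD · 0)).mono ?_
  rintro _ ⟨⟨k, α⟩, rfl⟩
  refine ⟨List.ofFn fun i : Fin k => α i, ?_⟩
  simp only [List.length_ofFn]
  exact Dk_congr fun i hi => by simp [hi]

lemma CondD.exists_not_isMeagre_Dk [TopologicalSpace X] [BaireSpace X] (hD : CondD M U)
    {α : ℕ → ℕ} (hα : α ∈ M) {x : X} (hUα : U α ∈ 𝓝 x) : ∃ k, ¬IsMeagre (Dk M U k α) := by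
  by_contra! h
  exact not_isMeagre_of_mem_nhds hUα (hD α hα ▸ isMeagre_iUnion h)

end Dk

section TopologicalGroup

variable {G : Type*} [Group G] [TopologicalSpace G] [IsTopologicalGroup G]

lemma closure_mul_inv_closure_subset (s : Set G) :
    closure s * (closure s)⁻¹ ⊆ closure (s * s⁻¹) := by
  rintro _ ⟨a, ha, b, hb, rfl⟩
  rw [inv_closure] at hb
  exact map_mem_closure₂ continuous_mul ha hb fun x hx y hy => mul_mem_mul hx hy

lemma closure_mul_inv_mem_nhds_one_of_not_isMeagre {s : Set G} (hs : ¬IsMeagre s) :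
    closure (s * s⁻¹) ∈ 𝓝 (1 : G) := by
  obtain ⟨x, hx⟩ : (interior (closure s)).Nonempty :=
    nonempty_iff_ne_empty.2 fun h => hs (IsNowhereDense.isMeagre h)
  have hopen : IsOpen (interior (closure s) * (interior (closure s))⁻¹) :=
    isOpen_interior.mul_right
  have hone : (1 : G) ∈ interior (closure s) * (interior (closure s))⁻¹ :=
    ⟨x, hx, x⁻¹, inv_mem_inv.2 hx, mul_inv_cancel x⟩
  exact mem_of_superset (hopen.mem_nhds hone)
    ((mul_subset_mul interior_subset (inv_subset_inv.2 interior_subset)).trans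
      (closure_mul_inv_closure_subset s))

lemma exists_nhds_one_closure_mul_inv_subset {O : Set G} (hO : O ∈ 𝓝 (1 : G)) :
    ∃ V ∈ 𝓝 (1 : G), closure (V * V⁻¹) ⊆ O := by
  obtain ⟨C, hC, hCclosed, hCO⟩ := exists_mem_nhds_isClosed_subset hO
  obtain ⟨V, hV, -, hVinv, hVC⟩ := exists_closed_nhds_one_inv_eq_mul_subset hC
  refine ⟨V, hV, (closure_minimal ?_ hCclosed).trans hCO⟩
  rwa [hVinv]

lemma isCountablyGenerated_nhds_one_of_countable {𝒟 : Set (Set G)} (h𝒟 : 𝒟.Countable)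
    (hsmall : ∀ V ∈ 𝓝 (1 : G), ∃ D ∈ 𝒟, ¬IsMeagre D ∧ D ⊆ V) :
    (𝓝 (1 : G)).IsCountablyGenerated := by
  have := h𝒟.to_subtype
  have hbasis : (𝓝 (1 : G)).HasBasis (fun D : 𝒟 => closure ((D : Set G) * (D : Set G)⁻¹) ∈ 𝓝 1)
      (fun D => closure ((D : Set G) * (D : Set G)⁻¹)) := by
    refine ⟨fun O => ⟨fun hO => ?_, fun ⟨D, hD, hDO⟩ => mem_of_superset hD hDO⟩⟩
    obtain ⟨V, hV, hVO⟩ := exists_nhds_one_closure_mul_inv_subset hO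
    obtain ⟨D, hD𝒟, hD, hDV⟩ := hsmall V hV
    exact ⟨⟨D, hD𝒟⟩, closure_mul_inv_mem_nhds_one_of_not_isMeagre hD,
      (closure_mono (mul_subset_mul hDV (inv_subset_inv.2 hDV))).trans hVO⟩
  exact hbasis.isCountablyGenerated

lemma IsTopologicalGroup.metrizableSpace_of_isCountablyGenerated [T0Space G]
    [(𝓝 (1 : G)).IsCountablyGenerated] : TopologicalSpace.MetrizableSpace G := by
  let := IsTopologicalGroup.rightUniformSpace G
  have : (uniformity G).IsCountablyGenerated := by
    rw [uniformity_eq_comap_nhds_one' G]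
    exact comap.isCountablyGenerated _ _
  exact UniformSpace.metrizableSpace

end TopologicalGroup

theorem statement5 {G : Type*} [Group G] [TopologicalSpace G] [IsTopologicalGroup G]
    [T2Space G] [BaireSpace G] (U : (ℕ → ℕ) → Set G)
    (hU : IsSmallBaseAt Set.univ U (1 : G)) (hD : CondD Set.univ U) :
    TopologicalSpace.MetrizableSpace G := by
  obtain ⟨-, hnhds, hbase⟩ := hU
  have : (𝓝 (1 : G)).IsCountablyGenerated := by
    refine isCountablyGenerated_nhds_one_of_countable (countable_range_Dk univ U) fun V hV => ?_
    obtain ⟨α, -, hαV⟩ := hbase V hV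
    obtain ⟨k, hk⟩ := hD.exists_not_isMeagre_Dk (mem_univ α) (hnhds α (mem_univ α))
    exact ⟨_, ⟨(k, α), rfl⟩, hk, (Dk_subset (mem_univ α) k).trans hαV⟩
  exact IsTopologicalGroup.metrizableSpace_of_isCountablyGenerated
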